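/- arXiv:1910.10286 — 2 statements merged into one kernel-verified Lean document; each statement's English description precedes it below -/
import Mathlib

section
/- Let S be a semigroup and a ∈ S. If a has a pre-inverse that is not J-related to a, i.e., there exists x ∈ S with a = a·x·a and ¬(x J a), then the variant S^a has no nontrivial maximal J^a-class: there is no y ∈ S with y ≤_J a such that for all z ∈ S, y ≤_{J^a} z implies z ≤_{J^a} y. -/
universe u

/-- Green's `≤_J` preorder relative to a binary operation `op`. -/
def leJo {S : Type u} (op : S → S → S) (x y : S) : Prop :=
  x = y ∨ (∃ a, x = op a y) ∨ (∃ b, x = op y b) ∨ ∃ a b, x = op (op a y) b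

/-- Green's `J` relation relative to `op`. -/
def grJo {S : Type u} (op : S → S → S) (x y : S) : Prop := leJo op x y ∧ leJo op y x

private lemma leJo_mul_trans {S : Type u} [Semigroup S] {x y z : S}
    (h1 : leJo (fun u v : S => u * v) x y) (h2 : leJo (fun u v : S => u * v) y z) :
    leJo (fun u v : S => u * v) x z := by
  unfold leJo at *
  rcases h1 with rfl | ⟨p, rfl⟩ | ⟨q, rfl⟩ | ⟨p, q, rfl⟩
  · exact h2
  · rcases h2 with rfl | ⟨p', rfl⟩ | ⟨q', rfl⟩ | ⟨p', q', rfl⟩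
    · exact Or.inr (Or.inl ⟨p, rfl⟩)
    · exact Or.inr (Or.inl ⟨p * p', by simp [mul_assoc]⟩)
    · exact Or.inr (Or.inr (Or.inr ⟨p, q', by simp [mul_assoc]⟩))
    · exact Or.inr (Or.inr (Or.inr ⟨p * p', q', by simp [mul_assoc]⟩))
  · rcases h2 with rfl | ⟨p', rfl⟩ | ⟨q', rfl⟩ | ⟨p', q', rfl⟩
    · exact Or.inr (Or.inr (Or.inl ⟨q, rfl⟩))
    · exact Or.inr (Or.inr (Or.inr ⟨p', q, rfl⟩))
    · exact Or.inr (Or.inr (Or.inl ⟨q' * q, by simp [mul_assoc]⟩))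
    · exact Or.inr (Or.inr (Or.inr ⟨p', q' * q, by simp [mul_assoc]⟩))
  · rcases h2 with rfl | ⟨p', rfl⟩ | ⟨q', rfl⟩ | ⟨p', q', rfl⟩
    · exact Or.inr (Or.inr (Or.inr ⟨p, q, rfl⟩))
    · exact Or.inr (Or.inr (Or.inr ⟨p * p', q, by simp [mul_assoc]⟩))
    · exact Or.inr (Or.inr (Or.inr ⟨p, q' * q, by simp [mul_assoc]⟩))
    · exact Or.inr (Or.inr (Or.inr ⟨p * p', q' * q, by simp [mul_assoc]⟩))

/-- If `a` has a pre-inverse not `J`-related to `a`, then the variant `S^a` has no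
nontrivial maximal `J^a`-class: there is no `y ≤_J a` such that `y ≤_{J^a} z` implies
`z ≤_{J^a} y` for all `z`. -/
theorem no_nontrivial_maximal_Ja_class {S : Type u} [Semigroup S] (a : S)
    (h : ∃ x : S, a = a * x * a ∧ ¬ grJo (fun u v : S => u * v) x a) :
    ¬ ∃ y : S, leJo (fun u v : S => u * v) y a ∧
        ∀ z : S, leJo (fun u v : S => u * a * v) y z →
          leJo (fun u v : S => u * a * v) z y := by
  obtain ⟨x, hax, hnJ⟩ := h
  rintro ⟨y, hya, hmax⟩
  have hr1 : a * (x * a) = a := by rw [← mul_assoc]; exact hax.symm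
  have hr2 : ∀ t : S, a * (x * (a * t)) = a * t := by
    intro t; rw [← mul_assoc, ← mul_assoc, ← hax]
  -- y ≤_{J^a} x
  have key : leJo (fun u v : S => u * a * v) y x := by
    rcases hya with hy | ⟨p, hy⟩ | ⟨q, hy⟩ | ⟨p, q, hy⟩ <;> rw [hy]
    · exact Or.inr (Or.inr (Or.inr ⟨a * x, x * a, by
        simp only [mul_assoc, hr1, hr2]⟩))
    · exact Or.inr (Or.inr (Or.inr ⟨p, x * a, by
        simp only [mul_assoc, hr1, hr2]⟩))
    · exact Or.inr (Or.inr (Or.inr ⟨a * x, q, by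
        simp only [mul_assoc, hr1, hr2]⟩))
    · exact Or.inr (Or.inr (Or.inr ⟨p, x * a * q, by
        simp only [mul_assoc, hr1, hr2]⟩))
  have hxy := hmax x key
  -- x ≤_J y
  have hxJy : leJo (fun u v : S => u * v) x y := by
    rcases hxy with rfl | ⟨p, hp⟩ | ⟨q, hq⟩ | ⟨p, q, hpq⟩
    · exact Or.inl rfl
    · exact Or.inr (Or.inl ⟨p * a, by simpa [mul_assoc] using hp⟩)
    · exact Or.inr (Or.inr (Or.inl ⟨a * q, by simpa [mul_assoc] using hq⟩))
    · exact Or.inr (Or.inr (Or.inr ⟨p * a, a * q, by simpa [mul_assoc] using hpq⟩))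
  have hxa : leJo (fun u v : S => u * v) x a := leJo_mul_trans hxJy hya
  have hax'' : leJo (fun u v : S => u * v) a x :=
    Or.inr (Or.inr (Or.inr ⟨a, a, hax⟩))
  exact hnJ ⟨hxa, hax''⟩
end

section
/- Let S be a semigroup and let a ∈ S be right-invertible, with b ∈ RI(a) = {b : x = x·a·b for all x ∈ S}. Then: (1) every x ∈ S satisfies x ≤_{J^a} b, so the J^a-class of b is the maximum J^a-class of the variant S^a, and it contains RI(a); (2) if moreover the variant S^a is stable, then the J^a-class of b equals the L^a-class of b, the set of idempotents of S^a contained in this class is exactly RI(a), and this class is closed under ⋆_a and, with the operation ⋆_a, is a left-group (isomorphic to a direct product of a left-zero semigroup and a group). -/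
universe u

/-- Green's `≤_R` preorder relative to a binary operation `op`. -/
def leRo {S : Type u} (op : S → S → S) (x y : S) : Prop := x = y ∨ ∃ a, x = op y a

/-- Green's `≤_L` preorder relative to a binary operation `op`. -/
def leLo {S : Type u} (op : S → S → S) (x y : S) : Prop := x = y ∨ ∃ a, x = op a y

/-- Green's `R` relation relative to `op`. -/
def grRo {S : Type u} (op : S → S → S) (x y : S) : Prop := leRo op x y ∧ leRo op y x

/-- Green's `L` relation relative to `op`. -/
def grLo {S : Type u} (op : S → S → S) (x y : S) : Prop := leLo op x y ∧ leLo op y x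

/-- Stability relative to `op`. -/
def StableOp {S : Type u} (op : S → S → S) : Prop :=
  ∀ x u : S, (grJo op x (op x u) → grRo op x (op x u)) ∧
    (grJo op x (op u x) → grLo op x (op u x))

/-- The variant `S^a`: the underlying set of `S` with operation `x ⋆_a y = x·a·y`. -/
def Variant (S : Type u) (a : S) : Type u := S

/-- Regard an element of `S` as an element of the variant `S^a`. -/
def Variant.of {S : Type u} (a : S) (x : S) : Variant S a := x

/-- Regard an element of the variant `S^a` as an element of `S`. -/
def Variant.val {S : Type u} {a : S} (x : Variant S a) : S := x

instance Variant.instMul {S : Type u} [Semigroup S] {a : S} : Mul (Variant S a) :=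
  ⟨fun x y => Variant.of a (x.val * a * y.val)⟩

instance Variant.instSemigroup {S : Type u} [Semigroup S] {a : S} :
    Semigroup (Variant S a) where
  mul_assoc x y z := by
    show Variant.of a (x.val * a * y.val * a * z.val)
        = Variant.of a (x.val * a * (y.val * a * z.val))
    exact congrArg (Variant.of a) (by simp [mul_assoc])

/-- A witness that the semigroup `S` is a left-group: an isomorphism of `S` with a direct
product `U × G` of a left-zero semigroup `U` and a group `G`. -/
structure LeftGroupWitness (S : Type u) [Mul S] where
  U : Type u
  G : Type u
  [semU : Semigroup U]
  [grpG : Group G]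
  left_zero : ∀ x y : U, x * y = x
  iso : S ≃* U × G

/-- `S` is a left-group if it is isomorphic to `U × G` with `U` left-zero and `G` a group. -/
def IsLeftGroup (S : Type u) [Mul S] : Prop :=
  Nonempty (LeftGroupWitness S)

section RImaxAux

variable {S : Type u} [Semigroup S]

/-- Everything is `≤_{J^a}` below `b`. -/
theorem aux_leJo_all (a b : S) (hb : ∀ x : S, x = x * a * b) (x : S) :
    leJo (fun u v : S => u * a * v) x b :=
  Or.inr (Or.inl ⟨x, hb x⟩)

/-- Elements of `RI(a)` are `J^a`-equivalent to `b`. -/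
theorem aux_ri_grJo (a b : S) (hb : ∀ x : S, x = x * a * b)
    (c : S) (hc : ∀ x : S, x = x * a * c) :
    grJo (fun u v : S => u * a * v) b c :=
  ⟨Or.inr (Or.inl ⟨b, hc b⟩), aux_leJo_all a b hb c⟩

/-- Under stability, `b J^a x` implies `b L^a x`. -/
theorem aux_grLo (a b : S) (hb : ∀ x : S, x = x * a * b)
    (hst : StableOp (fun u v : S => u * a * v)) (x : S)
    (h : grJo (fun u v : S => u * a * v) b x) :
    grLo (fun u v : S => u * a * v) b x := by
  have h2 := (hst b x).2
  change grJo _ b (x * a * b) → grLo _ b (x * a * b) at h2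
  rw [← hb x] at h2
  exact h2 h

/-- Under stability, `b J^a x` yields a strict left factorization. -/
theorem aux_exL (a b : S) (hb : ∀ x : S, x = x * a * b)
    (hst : StableOp (fun u v : S => u * a * v)) (x : S)
    (h : grJo (fun u v : S => u * a * v) b x) :
    ∃ u : S, b = u * a * x := by
  rcases (aux_grLo a b hb hst x h).1 with h1 | ⟨u, hu⟩
  · exact ⟨b, by rw [← h1]; exact hb b⟩
  · exact ⟨u, hu⟩

/-- A strict left factorization puts `x` in the `J^a`-class of `b`. -/
theorem aux_of_exL (a b : S) (hb : ∀ x : S, x = x * a * b) (x : S)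
    (h : ∃ u : S, b = u * a * x) :
    grJo (fun u v : S => u * a * v) b x :=
  ⟨Or.inr (Or.inl h), aux_leJo_all a b hb x⟩

/-- Idempotents of the variant in the `J^a`-class of `b` belong to `RI(a)`. -/
theorem aux_idem_ri (a b : S) (hb : ∀ x : S, x = x * a * b)
    (hst : StableOp (fun u v : S => u * a * v)) (x : S)
    (hj : grJo (fun u v : S => u * a * v) b x) (hx : x = x * a * x) :
    ∀ y : S, y = y * a * x := by
  obtain ⟨u, hu⟩ := aux_exL a b hb hst x hj
  intro y
  calc y = y * a * b := hb y
    _ = y * a * (u * a * x) := by rw [hu]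
    _ = y * a * (u * a * (x * a * x)) := by rw [← hx]
    _ = (y * a * b) * a * x := by rw [hu]; simp [mul_assoc]
    _ = y * a * x := by rw [← hb y]

/-- The `J^a`-class of `b` is closed under `⋆_a`. -/
theorem aux_closure (a b : S) (hb : ∀ x : S, x = x * a * b)
    (hst : StableOp (fun u v : S => u * a * v)) (x y : S)
    (hx : grJo (fun u v : S => u * a * v) b x)
    (hy : grJo (fun u v : S => u * a * v) b y) :
    grJo (fun u v : S => u * a * v) b (x * a * y) := by
  obtain ⟨u, hu⟩ := aux_exL a b hb hst x hx
  obtain ⟨v, hv⟩ := aux_exL a b hb hst y hy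
  apply aux_of_exL a b hb
  refine ⟨v * a * u, ?_⟩
  calc b = v * a * y := hv
    _ = (v * a * b) * a * y := by rw [← hb v]
    _ = (v * a * (u * a * x)) * a * y := by rw [hu]
    _ = (v * a * u) * a * (x * a * y) := by simp [mul_assoc]

/-- The underlying type of the left-zero part: `RI(a)`. -/
def RIa (a : S) : Type u := {c : S // ∀ x : S, x = x * a * c}

instance RIa.instMul (a : S) : Mul (RIa a) := ⟨fun c _ => c⟩

instance RIa.instSemigroup (a : S) : Semigroup (RIa a) := ⟨fun _ _ _ => rfl⟩

/-- The underlying type of the group part. -/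
def GrpC (a b : S) : Type u := {x : S // b * a * x = x ∧ ∃ u : S, b = u * a * x}

instance GrpC.instMul (a b : S) : Mul (GrpC a b) :=
  ⟨fun g h =>
    ⟨g.1 * a * h.1, by
      obtain ⟨hg1, _⟩ := g.2
      calc b * a * (g.1 * a * h.1) = (b * a * g.1) * a * h.1 := by simp [mul_assoc]
        _ = g.1 * a * h.1 := by rw [hg1], by
      obtain ⟨_, ug, hug⟩ := g.2
      obtain ⟨hh1, uh, huh⟩ := h.2
      refine ⟨uh * a * ug, ?_⟩
      calc b = uh * a * h.1 := huh
        _ = uh * a * (b * a * h.1) := by rw [hh1]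
        _ = uh * a * ((ug * a * g.1) * a * h.1) := by rw [← hug]
        _ = (uh * a * ug) * a * (g.1 * a * h.1) := by simp [mul_assoc]⟩⟩

/-- The group structure on `GrpC a b`. -/
noncomputable def grpCGroup (a b : S) (hb : ∀ x : S, x = x * a * b)
    (hst : StableOp (fun u v : S => u * a * v)) : Group (GrpC a b) :=
  letI : One (GrpC a b) := ⟨⟨b, (hb b).symm, ⟨b, hb b⟩⟩⟩
  letI : Inv (GrpC a b) :=
    ⟨fun g =>
      ⟨b * a * Classical.choose g.2.2, by
        calc b * a * (b * a * Classical.choose g.2.2)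
            = (b * a * b) * a * Classical.choose g.2.2 := by simp [mul_assoc]
          _ = b * a * Classical.choose g.2.2 := by rw [← hb b], by
        have hu := Classical.choose_spec g.2.2
        set u := Classical.choose g.2.2 with hudef
        have hju : grJo (fun p q : S => p * a * q) b u :=
          ⟨Or.inr (Or.inr (Or.inl ⟨g.1, hu⟩)), aux_leJo_all a b hb u⟩
        obtain ⟨w, hw⟩ := aux_exL a b hb hst u hju
        refine ⟨w, ?_⟩
        calc b = w * a * u := hw
          _ = (w * a * b) * a * u := by rw [← hb w]
          _ = w * a * (b * a * u) := by simp [mul_assoc]⟩⟩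
  Group.ofLeftAxioms
    (fun g h k => Subtype.ext (by
      show (g.1 * a * h.1) * a * k.1 = g.1 * a * (h.1 * a * k.1)
      simp [mul_assoc]))
    (fun g => Subtype.ext (show b * a * g.1 = g.1 from g.2.1))
    (fun g => Subtype.ext (by
      have hu := Classical.choose_spec g.2.2
      show (b * a * Classical.choose g.2.2) * a * g.1 = b
      calc (b * a * Classical.choose g.2.2) * a * g.1
          = b * a * (Classical.choose g.2.2 * a * g.1) := by simp [mul_assoc]
        _ = b * a * b := by rw [← hu]
        _ = b := (hb b).symm))

end RImaxAux

/-- Let `a ∈ S` be right-invertible with `b ∈ RI(a)`.  Then: (1) every `x` satisfies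
`x ≤_{J^a} b`, so the `J^a`-class of `b` is the maximum `J^a`-class of `S^a`, and it
contains `RI(a)`; (2) if `S^a` is stable, then the `J^a`-class of `b` equals the
`L^a`-class of `b`, its idempotents are exactly `RI(a)`, and it is closed under `⋆_a`
and is a left-group. -/
theorem right_invertible_maximum_Ja_class {S : Type u} [Semigroup S] (a b : S)
    (hb : ∀ x : S, x = x * a * b) :
    (∀ x : S, leJo (fun u v : S => u * a * v) x b) ∧
    (∀ c : S, (∀ x : S, x = x * a * c) → grJo (fun u v : S => u * a * v) b c) ∧
    (StableOp (fun u v : S => u * a * v) →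
      ({x : S | grJo (fun u v : S => u * a * v) b x}
          = {x : S | grLo (fun u v : S => u * a * v) b x}) ∧
      ({x : S | grJo (fun u v : S => u * a * v) b x ∧ x = x * a * x}
          = {c : S | ∀ x : S, x = x * a * c}) ∧
      (∀ x y : S, grJo (fun u v : S => u * a * v) b x →
        grJo (fun u v : S => u * a * v) b y →
        grJo (fun u v : S => u * a * v) b (x * a * y)) ∧
      (∃ T : Subsemigroup (Variant S a),
        (∀ x : S, Variant.of a x ∈ T ↔ grJo (fun u v : S => u * a * v) b x) ∧
        IsLeftGroup ↥T)) := by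
  refine ⟨aux_leJo_all a b hb, aux_ri_grJo a b hb, fun hst => ⟨?_, ?_, aux_closure a b hb hst, ?_⟩⟩
  · -- J-class = L-class
    ext x
    constructor
    · exact fun h => aux_grLo a b hb hst x h
    · rintro ⟨(h1 | ⟨u, hu⟩), -⟩
      · exact ⟨Or.inl h1, aux_leJo_all a b hb x⟩
      · exact ⟨Or.inr (Or.inl ⟨u, hu⟩), aux_leJo_all a b hb x⟩
  · -- idempotents in the class are exactly RI(a)
    ext c
    constructor
    · exact fun ⟨hj, hi⟩ => aux_idem_ri a b hb hst c hj hi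
    · exact fun hc => ⟨aux_ri_grJo a b hb c hc, hc c⟩
  · -- the subsemigroup and the left-group structure
    refine ⟨{ carrier := {x : Variant S a | grJo (fun u v : S => u * a * v) b x.val},
              mul_mem' := fun hp hq => aux_closure a b hb hst _ _ hp hq },
            fun x => Iff.rfl, ?_⟩
    letI grp : Group (GrpC a b) := grpCGroup a b hb hst
    refine ⟨{ U := RIa a, G := GrpC a b, semU := inferInstance, grpG := grp,
              left_zero := fun _ _ => rfl, iso := ?_ }⟩
    set T : Subsemigroup (Variant S a) :=
      { carrier := {x : Variant S a | grJo (fun u v : S => u * a * v) b x.val},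
        mul_mem' := fun hp hq => aux_closure a b hb hst _ _ hp hq } with hT
    let f : RIa a × GrpC a b → ↥T := fun p =>
      ⟨Variant.of a (p.1.1 * a * p.2.1),
        aux_closure a b hb hst _ _ (aux_ri_grJo a b hb _ p.1.2)
          (aux_of_exL a b hb _ p.2.2.2)⟩
    have hinj : Function.Injective f := by
      rintro ⟨⟨c, hc⟩, ⟨g, hg1, hg2⟩⟩ ⟨⟨c', hc'⟩, ⟨g', hg1', hg2'⟩⟩ h
      have hval : c * a * g = c' * a * g' := congrArg Subtype.val h
      have hgg : g = g' := by
        calc g = b * a * g := hg1.symm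
          _ = (b * a * c) * a * g := by rw [← hc b]
          _ = b * a * (c * a * g) := by simp [mul_assoc]
          _ = b * a * (c' * a * g') := by rw [hval]
          _ = (b * a * c') * a * g' := by simp [mul_assoc]
          _ = b * a * g' := by rw [← hc' b]
          _ = g' := hg1'
      obtain ⟨u, hu⟩ := hg2
      have hju : grJo (fun p q : S => p * a * q) b (g * a * u) := by
        refine ⟨Or.inr (Or.inr (Or.inr ⟨u, g, ?_⟩)), aux_leJo_all a b hb _⟩
        calc b = u * a * g := hu
          _ = u * a * (g * a * b) := by rw [← hb g]
          _ = u * a * (g * a * (u * a * g)) := by rw [hu]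
          _ = (u * a * (g * a * u)) * a * g := by simp [mul_assoc]
      have hidem : g * a * u = (g * a * u) * a * (g * a * u) := by
        calc g * a * u = (g * a * b) * a * u := by rw [← hb g]
          _ = (g * a * (u * a * g)) * a * u := by rw [hu]
          _ = (g * a * u) * a * (g * a * u) := by simp [mul_assoc]
      have hri := aux_idem_ri a b hb hst _ hju hidem
      have hgu : g * a * u = b := by
        calc g * a * u = (b * a * g) * a * u := by rw [hg1]
          _ = b * a * (g * a * u) := by simp [mul_assoc]
          _ = b := (hri b).symm
      have hcc : c = c' := by
        calc c = c * a * b := hb c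
          _ = c * a * (g * a * u) := by rw [hgu]
          _ = (c * a * g) * a * u := by simp [mul_assoc]
          _ = (c' * a * g') * a * u := by rw [hval]
          _ = c' * a * (g' * a * u) := by simp [mul_assoc]
          _ = c' * a * (g * a * u) := by rw [hgg]
          _ = c' * a * b := by rw [hgu]
          _ = c' := (hb c').symm
      subst hgg; subst hcc
      rfl
    have hsurj : Function.Surjective f := by
      rintro ⟨xv, hx⟩
      obtain ⟨u, hu⟩ := aux_exL a b hb hst (Variant.val xv) hx
      set z : S := Variant.val xv with hz
      have hidem : z * a * u = (z * a * u) * a * (z * a * u) := by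
        calc z * a * u = (z * a * b) * a * u := by rw [← hb z]
          _ = (z * a * (u * a * z)) * a * u := by rw [hu]
          _ = (z * a * u) * a * (z * a * u) := by simp [mul_assoc]
      have hju : grJo (fun p q : S => p * a * q) b (z * a * u) := by
        refine ⟨Or.inr (Or.inr (Or.inr ⟨u, z, ?_⟩)), aux_leJo_all a b hb _⟩
        calc b = u * a * z := hu
          _ = u * a * (z * a * b) := by rw [← hb z]
          _ = u * a * (z * a * (u * a * z)) := by rw [hu]
          _ = (u * a * (z * a * u)) * a * z := by simp [mul_assoc]
      have hri := aux_idem_ri a b hb hst _ hju hidem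
      have hg1 : b * a * (b * a * z) = b * a * z := by
        calc b * a * (b * a * z) = (b * a * b) * a * z := by simp [mul_assoc]
          _ = b * a * z := by rw [← hb b]
      have hg2 : ∃ w : S, b = w * a * (b * a * z) := by
        refine ⟨u, ?_⟩
        calc b = u * a * z := hu
          _ = (u * a * b) * a * z := by rw [← hb u]
          _ = u * a * (b * a * z) := by simp [mul_assoc]
      refine ⟨⟨⟨z * a * u, hri⟩, ⟨b * a * z, hg1, hg2⟩⟩, ?_⟩
      apply Subtype.ext
      show (z * a * u) * a * (b * a * z) = z
      calc (z * a * u) * a * (b * a * z) = (z * a * (u * a * b)) * a * z := by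
            simp [mul_assoc]
        _ = (z * a * u) * a * z := by rw [← hb u]
        _ = z * a * (u * a * z) := by simp [mul_assoc]
        _ = z * a * b := by rw [← hu]
        _ = z := (hb z).symm
    have hmul : ∀ p q : RIa a × GrpC a b, f (p * q) = f p * f q := by
      rintro ⟨⟨c, hc⟩, g⟩ ⟨⟨c', hc'⟩, g'⟩
      apply Subtype.ext
      show c * a * (g.1 * a * g'.1) = (c * a * g.1) * a * (c' * a * g'.1)
      calc c * a * (g.1 * a * g'.1) = (c * a * g.1) * a * g'.1 := by simp [mul_assoc]
        _ = (c * a * (g.1 * a * c')) * a * g'.1 := by rw [← hc' g.1]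
        _ = (c * a * g.1) * a * (c' * a * g'.1) := by simp [mul_assoc]
    exact (MulEquiv.mk' (Equiv.ofBijective f ⟨hinj, hsurj⟩) hmul).symm
end
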